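/- arXiv:2009.07309 — 3 statements merged into one kernel-verified Lean document; each statement's English description precedes it below -/
import Mathlib

section
/- Let N > 0 and K satisfy 2^(K-1) ≤ N < 2^K. Let b̃ = b̃_{K-1}...b̃_0 be the binary representation of N-1, let K_0 be the set of indices k with b̃_k = 0, and define H(b) = Σ_{k_0 ∈ K_0} b_{k_0} · Π_{k=k_0+1}^{K-1} (1 - (b_k - b̃_k)²) for a bit vector b encoding a number n ∈ {0,...,2^K - 1}. Then H(b) ≥ 0, with equality if and only if n < N. -/
/-!
Each summand of `H` is `0` or `1`, and it is `1` exactly when `k₀` is the most significant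
position at which `b` and `b̃` differ and there `b` has a `1` while `b̃` has a `0`. Such a position
exists iff `n > N - 1`: comparing binary expansions is comparing their sets of `1`-positions in
colexicographic order.
-/

open Finset

theorem Finset.toColex_lt_toColex_iff_exists_forall_lt_mem_iff {α : Type*} [LinearOrder α]
    {s t : Finset α} :
    toColex s < toColex t ↔ ∃ w ∈ t \ s, ∀ a, w < a → (a ∈ s ↔ a ∈ t) := by
  simp [Colex.lt_iff_exists_filter_lt, filter_inj]

theorem Fin.geomSum_lt_geomSum_iff_toColex_lt_toColex {K n : ℕ} (hn : 2 ≤ n)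
    {s t : Finset (Fin K)} :
    ∑ i ∈ s, n ^ (i : ℕ) < ∑ i ∈ t, n ^ (i : ℕ) ↔ toColex s < toColex t := by
  rw [← sum_image (g := Fin.val) (f := (n ^ ·)) Fin.val_injective.injOn,
    ← sum_image (g := Fin.val) (f := (n ^ ·)) Fin.val_injective.injOn,
    Finset.geomSum_lt_geomSum_iff_toColex_lt_toColex hn,
    Colex.toColex_image_lt_toColex_image Fin.val_strictMono]

theorem Nat.sum_ite_testBit_mul_two_pow {m K : ℕ} (hm : m < 2 ^ K) :
    ∑ k : Fin K, (if m.testBit k then 1 else 0) * 2 ^ (k : ℕ) = m := by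
  have hbits : (univ.filter fun k : Fin K ↦ m.testBit k).image Fin.val = m.bitIndices.toFinset := by
    ext i
    simp only [mem_image, mem_filter, mem_univ, true_and, List.mem_toFinset, mem_bitIndices]
    refine ⟨?_, fun h ↦ ⟨⟨i, ?_⟩, h, rfl⟩⟩
    · rintro ⟨k, hk, rfl⟩
      exact hk
    · exact (Nat.pow_lt_pow_iff_right (by norm_num)).1 ((Nat.ge_two_pow_of_testBit h).trans_lt hm)
  calc ∑ k : Fin K, (if m.testBit k then 1 else 0) * 2 ^ (k : ℕ)
      = ∑ k ∈ univ.filter fun k : Fin K ↦ m.testBit k, 2 ^ (k : ℕ) := by simp [ite_mul, sum_filter]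
    _ = ∑ i ∈ m.bitIndices.toFinset, 2 ^ i := by rw [← hbits, sum_image Fin.val_injective.injOn]
    _ = m := sum_toFinset_bitIndices_two_pow m

theorem one_sub_sub_sq_eq_ite {u v : ℤ} (hu : u = 0 ∨ u = 1) (hv : v = 0 ∨ v = 1) :
    1 - (u - v) ^ 2 = if u = v then 1 else 0 := by
  rcases hu with rfl | rfl <;> rcases hv with rfl | rfl <;> norm_num

section LinearOrder

variable {α : Type*} [LinearOrder α] [Fintype α] [LocallyFiniteOrderTop α] {x y : α → ℤ}

theorem mul_prod_one_sub_sub_sq_eq_ite (hx : ∀ k, x k = 0 ∨ x k = 1)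
    (hy : ∀ k, y k = 0 ∨ y k = 1) (k₀ : α) :
    x k₀ * ∏ k ∈ Ioi k₀, (1 - (x k - y k) ^ 2) =
      if x k₀ = 1 ∧ ∀ k, k₀ < k → x k = y k then 1 else 0 := by
  simp_rw [one_sub_sub_sq_eq_ite (hx _) (hy _), prod_boole, mem_Ioi]
  rcases hx k₀ with h | h <;> simp [h]

theorem sum_mul_prod_one_sub_sub_sq_eq_card (hx : ∀ k, x k = 0 ∨ x k = 1)
    (hy : ∀ k, y k = 0 ∨ y k = 1) :
    ∑ k₀ ∈ univ.filter (y · = 0), x k₀ * ∏ k ∈ Ioi k₀, (1 - (x k - y k) ^ 2) =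
      #{k₀ | y k₀ = 0 ∧ x k₀ = 1 ∧ ∀ k, k₀ < k → x k = y k} := by
  simp_rw [mul_prod_one_sub_sub_sq_eq_ite hx hy, sum_boole, filter_filter]

end LinearOrder

section Bits

variable {K : ℕ} {x y : Fin K → ℤ}

theorem sum_bits_mul_two_pow (hx : ∀ k, x k = 0 ∨ x k = 1) :
    ∑ k, x k * 2 ^ (k : ℕ) = ((∑ k ∈ univ.filter (x · = 1), 2 ^ (k : ℕ) : ℕ) : ℤ) := by
  push_cast
  rw [sum_filter]
  refine sum_congr rfl fun k _ ↦ ?_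
  rcases hx k with h | h <;> simp [h]

theorem sum_bits_mul_two_pow_lt_iff (hx : ∀ k, x k = 0 ∨ x k = 1)
    (hy : ∀ k, y k = 0 ∨ y k = 1) :
    ∑ k, y k * 2 ^ (k : ℕ) < ∑ k, x k * 2 ^ (k : ℕ) ↔
      ∃ k₀, y k₀ = 0 ∧ x k₀ = 1 ∧ ∀ k, k₀ < k → x k = y k := by
  have bit_eq_iff : ∀ k, x k = y k ↔ (y k = 1 ↔ x k = 1) := fun k ↦ by
    rcases hx k with h | h <;> rcases hy k with h' | h' <;> simp [h, h']
  have bit_zero_iff : ∀ k, y k = 0 ↔ ¬ y k = 1 := fun k ↦ by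
    rcases hy k with h | h <;> simp [h]
  rw [sum_bits_mul_two_pow hx, sum_bits_mul_two_pow hy, Nat.cast_lt,
    Fin.geomSum_lt_geomSum_iff_toColex_lt_toColex le_rfl,
    toColex_lt_toColex_iff_exists_forall_lt_mem_iff]
  simp only [mem_sdiff, mem_filter, mem_univ, true_and, bit_eq_iff, bit_zero_iff]
  exact exists_congr fun k ↦ by rw [and_comm (a := x k = 1), and_assoc]

end Bits

theorem hobo_valid_nonneg_and_zero_iff_general
    (N K : ℕ) (hN : 0 < N) (h2 : N < 2 ^ K)
    (b : Fin K → ℤ) (hb : ∀ k, b k = 0 ∨ b k = 1)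
    (btilde : Fin K → ℤ)
    (hbt : ∀ k : Fin K, btilde k = if Nat.testBit (N - 1) k then 1 else 0)
    (H : ℤ)
    (hH : H = ∑ k0 ∈ Finset.univ.filter (fun k : Fin K => btilde k = 0),
        b k0 * ∏ k ∈ Finset.Ioi k0, (1 - (b k - btilde k) ^ 2))
    (n : ℤ) (hn : n = ∑ k : Fin K, b k * 2 ^ (k : ℕ)) :
    0 ≤ H ∧ (H = 0 ↔ n < (N : ℤ)) := by
  have hbtilde : ∀ k, btilde k = 0 ∨ btilde k = 1 := fun k ↦ by
    rw [hbt k]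
    split <;> simp
  have hbtilde_sum : ∑ k, btilde k * 2 ^ (k : ℕ) = ((N - 1 : ℕ) : ℤ) := by
    simp_rw [hbt]
    exact_mod_cast Nat.sum_ite_testBit_mul_two_pow (show N - 1 < 2 ^ K by omega)
  have hlex := sum_bits_mul_two_pow_lt_iff hb hbtilde
  rw [hbtilde_sum, ← hn] at hlex
  rw [sum_mul_prod_one_sub_sub_sq_eq_card hb hbtilde] at hH
  refine ⟨hH ▸ Nat.cast_nonneg _, ?_⟩
  simp only [hH, Nat.cast_eq_zero, card_eq_zero, filter_eq_empty_iff]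
  rw [show n < N ↔ ¬ ((N - 1 : ℕ) : ℤ) < n by omega, hlex]
  simp

/-- Validity Hamiltonian for the HOBO encoding: `H(b) ≥ 0`, with equality
iff the encoded number `n = ∑ b_k 2^k` satisfies `n < N`. -/
theorem hobo_valid_nonneg_and_zero_iff
    (N K : ℕ) (hN : 0 < N) (h1 : 2 ^ (K - 1) ≤ N) (h2 : N < 2 ^ K)
    (b : Fin K → ℤ) (hb : ∀ k, b k = 0 ∨ b k = 1)
    (btilde : Fin K → ℤ)
    (hbt : ∀ k : Fin K, btilde k = if Nat.testBit (N - 1) k then 1 else 0)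
    (H : ℤ)
    (hH : H = ∑ k0 ∈ Finset.univ.filter (fun k : Fin K => btilde k = 0),
        b k0 * ∏ k ∈ Finset.Ioi k0, (1 - (b k - btilde k) ^ 2))
    (n : ℤ) (hn : n = ∑ k : Fin K, b k * 2 ^ (k : ℕ)) :
    0 ≤ H ∧ (H = 0 ↔ n < (N : ℤ)) :=
  hobo_valid_nonneg_and_zero_iff_general N K hN h2 b hb btilde hbt H hH n hn
end

section
/- For the complete graph on N vertices (N ≥ 2), the edges can be partitioned into N-1 perfect matchings when N is even, and into N matchings each of size (N-1)/2 when N is odd (round-robin scheduling). -/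
/-!
Number the vertices by an additive group `α` of odd order and colour the edge `{a, b}` by
`a + b`. In colour class `m` the partner of `a` can only be `m - a`, so the class is a matching;
it misses exactly the vertex `a₀` with `a₀ + a₀ = m`, which is unique because doubling is
bijective in a group of odd order, so it has `(|α| - 1) / 2` edges. For an even number of
vertices add a vertex `∞` and colour `{∞, a}` by `a + a`: in colour `m` it joins `∞` to the
vertex `a₀` that the odd schedule leaves out, so every class becomes a perfect matching.
-/

open Finset SimpleGraph

section EdgeColoring

variable {V W C : Type*} {f : Sym2 V → C} {m : C}

def edgeColorClass (f : Sym2 V → C) (m : C) : SimpleGraph V :=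
  fromEdgeSet (f ⁻¹' {m})

@[simp]
lemma edgeColorClass_adj {a b : V} : (edgeColorClass f m).Adj a b ↔ f s(a, b) = m ∧ a ≠ b :=
  fromEdgeSet_adj _

lemma mem_edgeSet_edgeColorClass {e : Sym2 V} :
    e ∈ (edgeColorClass f m).edgeSet ↔ ¬e.IsDiag ∧ f e = m := by
  simp [edgeColorClass, and_comm]

lemma existsUnique_adj_comp_map (e : W ≃ V) (h : ∀ v, ∃! w, (edgeColorClass f m).Adj v w)
    (v : W) : ∃! w, (edgeColorClass (f ∘ Sym2.map e) m).Adj v w := by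
  simpa using e.existsUnique_congr_right.mpr (h (e v))

lemma disjoint_edges_of_subsingleton_neighborSet
    (h : ∀ v, ((edgeColorClass f m).neighborSet v).Subsingleton) :
    ∀ e e' : Sym2 V, ¬e.IsDiag → ¬e'.IsDiag → f e = m → f e' = m → e ≠ e' →
      ∀ v, ¬(v ∈ e ∧ v ∈ e') := by
  rintro e e' hd hd' hf hf' hne v ⟨hv, hv'⟩
  obtain ⟨w, rfl⟩ := Sym2.mem_iff_exists.mp hv
  obtain ⟨w', rfl⟩ := Sym2.mem_iff_exists.mp hv'
  rw [Sym2.mk_isDiag_iff] at hd hd'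
  exact hne <| congrArg _ <|
    h v (edgeColorClass_adj.mpr ⟨hf, hd⟩) (edgeColorClass_adj.mpr ⟨hf', hd'⟩)

lemma exists_edge_mem_of_exists_adj (h : ∀ v, ∃ w, (edgeColorClass f m).Adj v w) (v : V) :
    ∃ e : Sym2 V, ¬e.IsDiag ∧ f e = m ∧ v ∈ e := by
  obtain ⟨w, hf, hvw⟩ := h v
  exact ⟨s(v, w), Sym2.mk_isDiag_iff.not.mpr hvw, hf, Sym2.mem_mk_left v w⟩

end EdgeColoring

section OddOrder

variable {α : Type*} [AddCommGroup α]

lemma existsUnique_add_self_eq (h : Odd (Nat.card α)) (m : α) : ∃! a : α, a + a = m := by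
  simpa only [two_nsmul] using (Nat.coprime_two_right.mpr h).nsmul_right_bijective.existsUnique m

def edgeSum : Sym2 α → α :=
  Sym2.lift ⟨(· + ·), add_comm⟩

@[simp]
lemma edgeSum_mk (a b : α) : edgeSum s(a, b) = a + b := rfl

lemma edgeColorClass_edgeSum_adj {m a b : α} :
    (edgeColorClass edgeSum m).Adj a b ↔ b = m - a ∧ a + a ≠ m := by
  rw [edgeColorClass_adj, edgeSum_mk, ← eq_sub_iff_add_eq']
  exact and_congr_right fun hb => by rw [hb, Ne, eq_sub_iff_add_eq]

lemma subsingleton_neighborSet_edgeSum (m v : α) :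
    ((edgeColorClass edgeSum m).neighborSet v).Subsingleton := fun _ hw _ hw' =>
  (edgeColorClass_edgeSum_adj.mp hw).1.trans (edgeColorClass_edgeSum_adj.mp hw').1.symm

lemma card_filter_edgeSum_eq [Fintype α] [DecidableEq α] (h : Odd (Nat.card α)) (m : α) :
    #{e : Sym2 α | ¬e.IsDiag ∧ edgeSum e = m} = (Fintype.card α - 1) / 2 := by
  classical
  obtain ⟨a₀, ha₀, ha₀_unique⟩ := existsUnique_add_self_eq h m
  have hedges : ({e : Sym2 α | ¬e.IsDiag ∧ edgeSum e = m} : Finset _) =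
      (edgeColorClass edgeSum m).edgeFinset := by
    ext e
    simp [mem_edgeSet_edgeColorClass]
  have hpairs : ({p : α × α | (edgeColorClass edgeSum m).Adj p.1 p.2} : Finset _) =
      (univ.erase a₀).image fun a => (a, m - a) := by
    ext ⟨a, b⟩
    simp only [mem_filter, mem_univ, true_and, edgeColorClass_edgeSum_adj, mem_image, mem_erase,
      Prod.mk.injEq]
    constructor
    · rintro ⟨rfl, ha⟩
      exact ⟨a, ⟨fun h => ha (h ▸ ha₀), trivial⟩, rfl, rfl⟩
    · rintro ⟨a, ⟨ha, -⟩, rfl, rfl⟩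
      exact ⟨rfl, fun h => ha (ha₀_unique a h)⟩
  have htwice : 2 * #(edgeColorClass edgeSum m).edgeFinset = Fintype.card α - 1 := by
    rw [two_mul_card_edgeFinset, hpairs,
      card_image_of_injective _ fun a b hab => (Prod.ext_iff.mp hab).1,
      card_erase_of_mem (mem_univ _), card_univ]
  rw [hedges]
  omega

-- `none` is the added vertex `∞`; the value `0` on the loop `s(none, none)` is never used.
def roundRobinColor : Sym2 (Option α) → α :=
  Sym2.lift ⟨fun
    | some a, some b => a + b
    | some a, none => a + a
    | none, some b => b + b
    | none, none => 0, by rintro (_ | a) (_ | b) <;> simp only [add_comm]⟩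

lemma existsUnique_adj_roundRobinColor (h : Odd (Nat.card α)) (m : α) (v : Option α) :
    ∃! w, (edgeColorClass roundRobinColor m).Adj v w := by
  obtain ⟨a₀, ha₀, ha₀_unique⟩ := existsUnique_add_self_eq h m
  have adj_some_some {a b : α} :
      (edgeColorClass roundRobinColor m).Adj (some a) (some b) ↔ b = m - a ∧ a + a ≠ m := by
    rw [← edgeColorClass_edgeSum_adj]
    simp [roundRobinColor]
  rcases v with _ | a
  · refine ⟨some a₀, edgeColorClass_adj.mpr ⟨ha₀, (Option.some_ne_none a₀).symm⟩, ?_⟩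
    rintro (_ | b) ⟨hb, hne⟩
    · exact absurd rfl hne
    · exact congrArg some (ha₀_unique b hb)
  by_cases ha : a + a = m
  · refine ⟨none, edgeColorClass_adj.mpr ⟨ha, Option.some_ne_none a⟩, ?_⟩
    rintro (_ | b) hb
    · rfl
    · exact absurd ha (adj_some_some.mp hb).2
  · refine ⟨some (m - a), adj_some_some.mpr ⟨rfl, ha⟩, ?_⟩
    rintro (_ | b) hb
    · exact absurd (edgeColorClass_adj.mp hb).1 ha
    · exact congrArg some (adj_some_some.mp hb).1

end OddOrder

theorem round_robin_schedule_general (N : ℕ) :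
    (Even N →
      ∃ f : Sym2 (Fin N) → Fin (N - 1),
        ∀ m : Fin (N - 1),
          (∀ e e' : Sym2 (Fin N), ¬e.IsDiag → ¬e'.IsDiag →
            f e = m → f e' = m → e ≠ e' → ∀ v : Fin N, ¬(v ∈ e ∧ v ∈ e')) ∧
          (∀ v : Fin N, ∃ e : Sym2 (Fin N), ¬e.IsDiag ∧ f e = m ∧ v ∈ e)) ∧
    (Odd N →
      ∃ f : Sym2 (Fin N) → Fin N,
        ∀ m : Fin N,
          (∀ e e' : Sym2 (Fin N), ¬e.IsDiag → ¬e'.IsDiag →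
            f e = m → f e' = m → e ≠ e' → ∀ v : Fin N, ¬(v ∈ e ∧ v ∈ e')) ∧
          (Finset.univ.filter
              (fun e : Sym2 (Fin N) => ¬e.IsDiag ∧ f e = m)).card = (N - 1) / 2) := by
  refine ⟨fun hEven => ?_, fun hOdd => ?_⟩
  · rcases N with _ | k
    · exact ⟨isEmptyElim, fun m => m.elim0⟩
    have hk : Odd k := by simpa [Nat.even_add_one] using hEven
    have : NeZero k := ⟨hk.pos.ne'⟩
    rw [Nat.add_sub_cancel]
    refine ⟨roundRobinColor ∘ Sym2.map finSuccEquivLast, fun m => ?_⟩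
    have huniq := existsUnique_adj_comp_map finSuccEquivLast
      (existsUnique_adj_roundRobinColor (by simpa using hk) m)
    exact ⟨disjoint_edges_of_subsingleton_neighborSet fun v _ hw _ hw' =>
      (huniq v).unique hw hw', exists_edge_mem_of_exists_adj fun v => (huniq v).exists⟩
  · have : NeZero N := ⟨hOdd.pos.ne'⟩
    have hcard : Odd (Nat.card (Fin N)) := by simpa using hOdd
    refine ⟨edgeSum, fun m => ⟨disjoint_edges_of_subsingleton_neighborSet
      (subsingleton_neighborSet_edgeSum m), ?_⟩⟩
    simpa using card_filter_edgeSum_eq hcard m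

/-- Round-robin scheduling: the edges of the complete graph on `N ≥ 2` vertices
can be partitioned into `N - 1` perfect matchings when `N` is even, and into
`N` matchings of size `(N-1)/2` each when `N` is odd. -/
theorem round_robin_schedule (N : ℕ) (hN : 2 ≤ N) :
    (Even N →
      ∃ f : Sym2 (Fin N) → Fin (N - 1),
        ∀ m : Fin (N - 1),
          (∀ e e' : Sym2 (Fin N), ¬e.IsDiag → ¬e'.IsDiag →
            f e = m → f e' = m → e ≠ e' → ∀ v : Fin N, ¬(v ∈ e ∧ v ∈ e')) ∧
          (∀ v : Fin N, ∃ e : Sym2 (Fin N), ¬e.IsDiag ∧ f e = m ∧ v ∈ e)) ∧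
    (Odd N →
      ∃ f : Sym2 (Fin N) → Fin N,
        ∀ m : Fin N,
          (∀ e e' : Sym2 (Fin N), ¬e.IsDiag → ¬e'.IsDiag →
            f e = m → f e' = m → e ≠ e' → ∀ v : Fin N, ¬(v ∈ e ∧ v ∈ e')) ∧
          (Finset.univ.filter
              (fun e : Sym2 (Fin N) => ¬e.IsDiag ∧ f e = m)).card = (N - 1) / 2) :=
  round_robin_schedule_general N
end

section
/- Let b ∈ ({0,1}^K)^L represent L bunches of K bits each. The constraint 'exactly one bunch is nonzero' holds if and only if Σ_{l=1}^L (Σ_k b_{lk}) ≥ 1 and Σ_{l=1}^L (Σ_k b_{lk})·(Σ_{l'≠l} Σ_k b_{l'k}) = 0; moreover the second sum is always nonnegative and equals 0 exactly when at most one bunch contains a nonzero bit. -/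
/-! Write `s l = ∑ k, b l k` for the weight of bunch `l`. The Hamiltonian is a sum of products
`s l · ∑_{l' ≠ l} s l'` of nonnegative terms, so it vanishes iff no two distinct bunches both have
positive weight. For bits a bunch is nonzero iff its weight is nonzero, and a nonzero weight is
at least `1`; hence `∑ s ≥ 1` says some bunch is nonzero. -/

open Finset

section PairProducts

variable {ι R : Type*} [Fintype ι] [DecidableEq ι] [Semiring R] [LinearOrder R]
  [IsStrictOrderedRing R] {s : ι → R}

theorem sum_mul_sum_erase_nonneg (hs : ∀ i, 0 ≤ s i) :
    0 ≤ ∑ i, s i * ∑ j ∈ univ.erase i, s j :=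
  sum_nonneg fun i _ => mul_nonneg (hs i) (sum_nonneg fun j _ => hs j)

theorem sum_mul_sum_erase_eq_zero_iff (hs : ∀ i, 0 ≤ s i) :
    ∑ i, s i * ∑ j ∈ univ.erase i, s j = 0 ↔ ∀ i j, s i ≠ 0 → s j ≠ 0 → i = j := by
  have hterm : ∀ i, 0 ≤ s i * ∑ j ∈ univ.erase i, s j :=
    fun i => mul_nonneg (hs i) (sum_nonneg fun j _ => hs j)
  rw [sum_eq_zero_iff_of_nonneg fun i _ => hterm i]
  constructor
  · intro h i j hi hj
    by_contra hij
    have hj_le : s j ≤ ∑ j' ∈ univ.erase i, s j' :=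
      single_le_sum (fun j' _ => hs j') (mem_erase.mpr ⟨Ne.symm hij, mem_univ j⟩)
    have hterm_pos : 0 < s i * ∑ j' ∈ univ.erase i, s j' :=
      mul_pos ((hs i).lt_of_ne' hi) (((hs j).lt_of_ne' hj).trans_le hj_le)
    exact hterm_pos.ne' (h i (mem_univ i))
  · intro h i _
    by_cases hi : s i = 0
    · rw [hi, zero_mul]
    · rw [sum_eq_zero fun j hj => by_contra fun hj_ne => (mem_erase.mp hj).1 (h j i hj_ne hi),
        mul_zero]

theorem one_le_sum_and_sum_mul_sum_erase_eq_zero_iff (hs : ∀ i, 0 ≤ s i)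
    (hs_one : ∀ i, s i ≠ 0 → 1 ≤ s i) :
    (1 ≤ ∑ i, s i ∧ ∑ i, s i * ∑ j ∈ univ.erase i, s j = 0) ↔ ∃! i, s i ≠ 0 := by
  rw [sum_mul_sum_erase_eq_zero_iff hs]
  constructor
  · rintro ⟨hsum, hunique⟩
    obtain ⟨i, hi⟩ : ∃ i, s i ≠ 0 := by
      by_contra! hzero
      simp only [hzero, sum_const_zero] at hsum
      exact not_le.mpr zero_lt_one hsum
    exact ⟨i, hi, fun j hj => hunique j i hj hi⟩
  · rintro ⟨i, hi, hunique⟩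
    refine ⟨?_, fun j j' hj hj' => (hunique j hj).trans (hunique j' hj').symm⟩
    calc 1 ≤ s i := hs_one i hi
      _ ≤ ∑ i, s i := single_le_sum (fun j _ => hs j) (mem_univ i)

end PairProducts

section Bits

variable {κ R : Type*} [Fintype κ] [Semiring R] [LinearOrder R] [IsStrictOrderedRing R]
  {x : κ → R}

theorem nonneg_of_eq_zero_or_eq_one {a : R} (ha : a = 0 ∨ a = 1) : 0 ≤ a := by
  rcases ha with rfl | rfl
  exacts [le_rfl, zero_le_one]

theorem sum_bits_nonneg (hx : ∀ k, x k = 0 ∨ x k = 1) : 0 ≤ ∑ k, x k :=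
  sum_nonneg fun k _ => nonneg_of_eq_zero_or_eq_one (hx k)

theorem sum_bits_ne_zero_iff (hx : ∀ k, x k = 0 ∨ x k = 1) :
    ∑ k, x k ≠ 0 ↔ ∃ k, x k ≠ 0 := by
  simp [sum_eq_zero_iff_of_nonneg fun k _ => nonneg_of_eq_zero_or_eq_one (hx k)]

theorem one_le_sum_bits (hx : ∀ k, x k = 0 ∨ x k = 1) (hne : ∑ k, x k ≠ 0) :
    1 ≤ ∑ k, x k := by
  obtain ⟨k, hk⟩ := (sum_bits_ne_zero_iff hx).mp hne
  calc 1 = x k := ((hx k).resolve_left hk).symm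
    _ ≤ ∑ k, x k := single_le_sum (fun j _ => nonneg_of_eq_zero_or_eq_one (hx j)) (mem_univ k)

end Bits

/-- Correctness of the validity Hamiltonian of the mixed encoding: for bits
`b_{lk} ∈ {0,1}` arranged in `L` bunches of `K` bits, the quadratic form
`Q = ∑_l (∑_k b_{lk})·(∑_{l'≠l} ∑_k b_{l'k})` is nonnegative, vanishes exactly
when at most one bunch is nonzero, and together with `∑_{l,k} b_{lk} ≥ 1` its
vanishing is equivalent to exactly one bunch being nonzero. -/
theorem mixed_valid_hamiltonian (L K : ℕ) (b : Fin L → Fin K → ℝ)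
    (hb : ∀ l k, b l k = 0 ∨ b l k = 1) :
    (0 ≤ ∑ l : Fin L, (∑ k : Fin K, b l k) *
        (∑ l' ∈ Finset.univ.erase l, ∑ k : Fin K, b l' k)) ∧
    ((∑ l : Fin L, (∑ k : Fin K, b l k) *
        (∑ l' ∈ Finset.univ.erase l, ∑ k : Fin K, b l' k)) = 0 ↔
      ∀ l l' : Fin L, (∃ k, b l k ≠ 0) → (∃ k, b l' k ≠ 0) → l = l') ∧
    ((1 ≤ ∑ l : Fin L, ∑ k : Fin K, b l k ∧
        (∑ l : Fin L, (∑ k : Fin K, b l k) *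
          (∑ l' ∈ Finset.univ.erase l, ∑ k : Fin K, b l' k)) = 0) ↔
      ∃! l : Fin L, ∃ k, b l k ≠ 0) := by
  have hweight_nonneg : ∀ l, 0 ≤ ∑ k, b l k := fun l => sum_bits_nonneg (hb l)
  simp only [← sum_bits_ne_zero_iff (hb _)]
  exact ⟨sum_mul_sum_erase_nonneg hweight_nonneg,
    sum_mul_sum_erase_eq_zero_iff hweight_nonneg,
    one_le_sum_and_sum_mul_sum_erase_eq_zero_iff hweight_nonneg
      fun l => one_le_sum_bits (hb l)⟩
end
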